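/- In an Erdős–Rényi–Gilbert random graph on N labelled vertices with edge probability π, fix a vertex i, an integer r ≥ 1, and positive integers n_1, …, n_r with 1 + n_1 + ⋯ + n_r ≤ N. The joint probability that the stage-s neighbour set of i has size n_s for every s = 1, …, r factorizes as a product of binomial probabilities: P(|𝒩_i^{(1)}| = n_1, …, |𝒩_i^{(r)}| = n_r) = ∏_{s=1}^{r} P(Z_{n_1:n_{s−1}}(N) = n_s), where Z_{n_1:n_{s−1}}(N) is a Binomial(N − Σ_{k=0}^{s−1} n_k, 1 − (1 − π)^{n_{s−1}}) random variable with n_0 = 1. -/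

import Mathlib

open MeasureTheory ProbabilityTheory Finset

noncomputable section

/-- The Bernoulli measure on `Bool` with success probability `p` (a real number,
intended to lie in `[0,1]`). -/
def bern (p : ℝ) : Measure Bool :=
  (PMF.bernoulli (min p.toNNReal 1) (min_le_right _ _)).toMeasure

instance (p : ℝ) : IsProbabilityMeasure (bern p) := by
  unfold bern; infer_instance

/-- The Erdős–Rényi–Gilbert measure on graphs with vertex set `Fin N`:
each potential edge (unordered pair of vertices) is present independently
with probability `p`. -/
def gilbert (N : ℕ) (p : ℝ) : Measure (Sym2 (Fin N) → Bool) :=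
  Measure.pi fun _ => bern p

/-- The simple graph determined by an edge-indicator function `ω`. -/
def graphOf {N : ℕ} (ω : Sym2 (Fin N) → Bool) : SimpleGraph (Fin N) where
  Adj i j := i ≠ j ∧ ω s(i, j) = true
  symm := by
    constructor
    intro i j h
    exact ⟨h.1.symm, by rw [Sym2.eq_swap]; exact h.2⟩
  loopless := by
    constructor
    intro i h
    exact h.1 rfl

/-- The neighbour set `𝒩(A)` of a set of vertices `A`. -/
def nbhdSet {V : Type*} (G : SimpleGraph V) (A : Set V) : Set V :=
  {j | ∃ i ∈ A, G.Adj i j}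

/-- Auxiliary recursion: `(stageAux G i r).1` is the stage-`r` neighbour set of `i`
and `(stageAux G i r).2` is `{i} ∪ ⋃_{q ≤ r} 𝒩_i^{(q)}`. -/
def stageAux {V : Type*} (G : SimpleGraph V) (i : V) : ℕ → Set V × Set V
  | 0 => ({i}, {i})
  | r + 1 =>
      ((nbhdSet G (stageAux G i r).1) \ (stageAux G i r).2,
       (stageAux G i r).2 ∪ ((nbhdSet G (stageAux G i r).1) \ (stageAux G i r).2))

/-- The stage-`r` neighbour set `𝒩_i^{(r)}` of vertex `i` in the graph `G`. -/
def stageSet {V : Type*} (G : SimpleGraph V) (i : V) (r : ℕ) : Set V :=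
  (stageAux G i r).1

/-- The probability mass function of a `Binomial(n, p)` random variable, evaluated at `k`. -/
def binomPMF (n : ℕ) (p : ℝ) (k : ℕ) : ℝ :=
  (n.choose k : ℝ) * p ^ k * (1 - p) ^ (n - k)

/-- `Zpmf N p m s` is the pmf of `Z_{n_1 : n_{s-1}}(N) ~ Binomial(N - ∑_{k=0}^{s-1} m k,
1 - (1-p)^{m (s-1)})`, evaluated at `m s` (here `m 0 = 1` by convention). -/
def Zpmf (N : ℕ) (p : ℝ) (m : ℕ → ℕ) (s : ℕ) : ℝ :=
  binomPMF (N - ∑ k ∈ Finset.range s, m k) (1 - (1 - p) ^ m (s - 1)) (m s)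

/-- `Lam k N` is the index set `Λ_k(N)`: tuples `(n_1, …, n_k)` of positive integers
with `1 + n_1 + ⋯ + n_k ≤ N` (recall `n_0 = 1`). -/
def Lam (k N : ℕ) : Finset (Fin k → ℕ) :=
  (Fintype.piFinset fun _ : Fin k => Finset.Icc 1 N).filter fun t => 1 + ∑ s, t s ≤ N

/-- Extend a tuple `(n_1, …, n_{r-1})` to a function `ℕ → ℕ` with `n_0 = 1` and
final value `n_r = nr`. -/
def extendTuple (r : ℕ) (t : Fin (r - 1) → ℕ) (nr : ℕ) : ℕ → ℕ := fun s =>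
  if s = 0 then 1 else if h : s - 1 < r - 1 then t ⟨s - 1, h⟩ else nr

/-- `π_s = P(j ∈ 𝒩_i^{(s)})` in the Erdős–Rényi–Gilbert model. -/
def piProb (N : ℕ) (p : ℝ) (i j : Fin N) (s : ℕ) : ℝ :=
  (gilbert N p {ω | j ∈ stageSet (graphOf ω) i s}).toReal

namespace ProofAux
open Classical in
/-- indicator of a proposition -/
def I (P : Prop) : ℝ := if P then 1 else 0

lemma I_true {P : Prop} (h : P) : I P = 1 := if_pos h
lemma I_false {P : Prop} (h : ¬P) : I P = 0 := if_neg h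
lemma I_congr {P Q : Prop} (h : P ↔ Q) : I P = I Q := by
  by_cases hp : P
  · rw [I_true hp, I_true (h.mp hp)]
  · rw [I_false hp, I_false (fun q => hp (h.mpr q))]

/-- per-edge weight -/
def w (p : ℝ) (b : Bool) : ℝ := if b then p else 1 - p

variable {ι : Type*} [Fintype ι] [DecidableEq ι]

/-- total weight of a configuration -/
def W (p : ℝ) (ω : ι → Bool) : ℝ := ∏ e, w p (ω e)

lemma sum_w (p : ℝ) : ∑ b : Bool, w p b = 1 := by
  simp [w]

lemma sum_weight_indPi (p : ℝ) (t : ι → Finset Bool) :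
    ∑ ω : ι → Bool, W p ω * I (∀ e, ω e ∈ t e) = ∏ e, ∑ b ∈ t e, w p b := by
  classical
  rw [Finset.prod_univ_sum]
  rw [← Finset.sum_filter_add_sum_filter_not Finset.univ (fun ω : ι → Bool => ∀ e, ω e ∈ t e)]
  have h2 : ∑ ω ∈ Finset.univ.filter (fun ω : ι → Bool => ¬ ∀ e, ω e ∈ t e),
      W p ω * I (∀ e, ω e ∈ t e) = 0 := by
    apply Finset.sum_eq_zero
    intro ω hω
    rw [Finset.mem_filter] at hω
    rw [I_false hω.2, mul_zero]
  rw [h2, add_zero]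
  have h3 : Finset.univ.filter (fun ω : ι → Bool => ∀ e, ω e ∈ t e) = Fintype.piFinset t := by
    ext ω; simp [Fintype.mem_piFinset]
  rw [h3]
  apply Finset.sum_congr rfl
  intro ω hω
  rw [Fintype.mem_piFinset] at hω
  rw [I_true hω, mul_one, W]

lemma totalW (p : ℝ) : ∑ ω : ι → Bool, W p ω = 1 := by
  classical
  have := sum_weight_indPi (ι := ι) p (fun _ => Finset.univ)
  simp only [Finset.mem_univ, I_true, mul_one, sum_w] at this
  simpa [I, sum_w] using this


lemma prod_split (p : ℝ) (P : ι → Prop) [DecidablePred P] (f g : (ι → Bool) → ℝ)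
    (hf : ∀ ω ω' : ι → Bool, (∀ e, P e → ω e = ω' e) → f ω = f ω')
    (hg : ∀ ω ω' : ι → Bool, (∀ e, ¬ P e → ω e = ω' e) → g ω = g ω') :
    ∑ ω : ι → Bool, W p ω * (f ω * g ω)
      = (∑ ω : ι → Bool, W p ω * f ω) * (∑ ω : ι → Bool, W p ω * g ω) := by
  classical
  set q := Equiv.piEquivPiSubtypeProd P (fun _ : ι => Bool) with hq
  set F : ({x // P x} → Bool) → ℝ := fun a => f (q.symm (a, fun _ => false)) with hF
  set G : ({x // ¬ P x} → Bool) → ℝ := fun b => g (q.symm (fun _ => false, b)) with hG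
  have hfa : ∀ a b, f (q.symm (a, b)) = F a := by
    intro a b
    apply hf
    intro e he
    simp [hq, Equiv.piEquivPiSubtypeProd_symm_apply, he]
  have hgb : ∀ a b, g (q.symm (a, b)) = G b := by
    intro a b
    apply hg
    intro e he
    simp [hq, Equiv.piEquivPiSubtypeProd_symm_apply, he]
  have hW : ∀ a b, W p (q.symm (a, b)) = (∏ e : {x // P x}, w p (a e)) * ∏ e : {x // ¬ P x}, w p (b e) := by
    intro a b
    rw [W, ← Fintype.prod_subtype_mul_prod_subtype P (fun e => w p (q.symm (a, b) e))]
    congr 1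
    · apply Finset.prod_congr rfl; intro e _
      congr 1
      simp [hq, Equiv.piEquivPiSubtypeProd_symm_apply, e.2]
    · apply Finset.prod_congr rfl; intro e _
      congr 1
      simp [hq, Equiv.piEquivPiSubtypeProd_symm_apply, e.2]
  have key : ∀ h : (ι → Bool) → ℝ, ∑ ω : ι → Bool, h ω = ∑ y : ({x // P x} → Bool) × ({x // ¬ P x} → Bool), h (q.symm y) :=
    fun h => (Equiv.sum_comp q.symm h).symm
  have expand : ∀ (F' : ({x // P x} → Bool) → ℝ) (G' : ({x // ¬ P x} → Bool) → ℝ),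
      (∑ y : ({x // P x} → Bool) × ({x // ¬ P x} → Bool),
        ((∏ e : {x // P x}, w p (y.1 e)) * F' y.1) * ((∏ e : {x // ¬ P x}, w p (y.2 e)) * G' y.2))
      = (∑ a : {x // P x} → Bool, (∏ e : {x // P x}, w p (a e)) * F' a)
        * (∑ b : {x // ¬ P x} → Bool, (∏ e : {x // ¬ P x}, w p (b e)) * G' b) := by
    intro F' G'
    rw [Fintype.sum_prod_type, Finset.sum_mul_sum]
  have totP : ∑ a : {x // P x} → Bool, (∏ e : {x // P x}, w p (a e)) = 1 := totalW p
  have totQ : ∑ b : {x // ¬ P x} → Bool, (∏ e : {x // ¬ P x}, w p (b e)) = 1 := totalW p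
  have e1 : ∑ ω : ι → Bool, W p ω * (f ω * g ω)
      = (∑ a : {x // P x} → Bool, (∏ e : {x // P x}, w p (a e)) * F a)
        * (∑ b : {x // ¬ P x} → Bool, (∏ e : {x // ¬ P x}, w p (b e)) * G b) := by
    rw [key (fun ω => W p ω * (f ω * g ω)), ← expand F G]
    apply Finset.sum_congr rfl
    intro y _
    rw [hW y.1 y.2, hfa y.1 y.2, hgb y.1 y.2]
    ring
  have e2 : ∑ ω : ι → Bool, W p ω * f ω
      = ∑ a : {x // P x} → Bool, (∏ e : {x // P x}, w p (a e)) * F a := by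
    rw [key (fun ω => W p ω * f ω)]
    have := expand F (fun _ => 1)
    simp only [mul_one] at this
    rw [show (∑ y : ({x // P x} → Bool) × ({x // ¬ P x} → Bool), W p (q.symm y) * f (q.symm y))
        = ∑ y : ({x // P x} → Bool) × ({x // ¬ P x} → Bool),
          ((∏ e : {x // P x}, w p (y.1 e)) * F y.1) * (∏ e : {x // ¬ P x}, w p (y.2 e)) from
      Finset.sum_congr rfl fun y _ => by rw [hW y.1 y.2, hfa y.1 y.2]; ring]
    rw [this, totQ, mul_one]
  have e3 : ∑ ω : ι → Bool, W p ω * g ω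
      = ∑ b : {x // ¬ P x} → Bool, (∏ e : {x // ¬ P x}, w p (b e)) * G b := by
    rw [key (fun ω => W p ω * g ω)]
    have := expand (fun _ => 1) G
    simp only [mul_one] at this
    rw [show (∑ y : ({x // P x} → Bool) × ({x // ¬ P x} → Bool), W p (q.symm y) * g (q.symm y))
        = ∑ y : ({x // P x} → Bool) × ({x // ¬ P x} → Bool),
          (∏ e : {x // P x}, w p (y.1 e)) * ((∏ e : {x // ¬ P x}, w p (y.2 e)) * G y.2) from
      Finset.sum_congr rfl fun y _ => by rw [hW y.1 y.2, hgb y.1 y.2]; ring]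
    have : (∑ y : ({x // P x} → Bool) × ({x // ¬ P x} → Bool),
        ((∏ e : {x // P x}, w p (y.1 e)) * 1) * ((∏ e : {x // ¬ P x}, w p (y.2 e)) * G y.2))
        = (∑ a : {x // P x} → Bool, (∏ e : {x // P x}, w p (a e)) * 1)
        * (∑ b : {x // ¬ P x} → Bool, (∏ e : {x // ¬ P x}, w p (b e)) * G b) := expand (fun _ => 1) G
    simp only [mul_one] at this
    rw [this, totP, one_mul]
  rw [e1, e2, e3]


lemma prod_split_family {J : Type*} (p : ℝ) (T : Finset J) (c : J → ι → Prop) (f : J → (ι → Bool) → ℝ)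
    (hdisj : ∀ j ∈ T, ∀ j' ∈ T, j ≠ j' → ∀ e, c j e → ¬ c j' e)
    (hdep : ∀ j ∈ T, ∀ ω ω' : ι → Bool, (∀ e, c j e → ω e = ω' e) → f j ω = f j ω') :
    ∑ ω : ι → Bool, W p ω * ∏ j ∈ T, f j ω = ∏ j ∈ T, ∑ ω : ι → Bool, W p ω * f j ω := by
  classical
  induction T using Finset.induction with
  | empty => simpa using totalW (ι := ι) p
  | @insert a s ha ih =>
    rw [Finset.prod_insert ha]
    have step : ∑ ω : ι → Bool, W p ω * (f a ω * ∏ j ∈ s, f j ω)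
        = (∑ ω : ι → Bool, W p ω * f a ω) * (∑ ω : ι → Bool, W p ω * ∏ j ∈ s, f j ω) := by
      apply prod_split p (c a)
      · exact hdep a (Finset.mem_insert_self a s)
      · intro ω ω' hagree
        apply Finset.prod_congr rfl
        intro j hj
        apply hdep j (Finset.mem_insert_of_mem hj)
        intro e he
        apply hagree
        exact hdisj j (Finset.mem_insert_of_mem hj) a (Finset.mem_insert_self a s)
          (fun h => ha (h ▸ hj)) e he
    rw [show (∑ ω : ι → Bool, W p ω * (f a ω * ∏ j ∈ s, f j ω))
        = ∑ ω : ι → Bool, W p ω * ∏ j ∈ insert a s, f j ω from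
      Finset.sum_congr rfl fun ω _ => by rw [Finset.prod_insert ha]] at step
    rw [step, ih
      (fun j hj j' hj' hne => hdisj j (Finset.mem_insert_of_mem hj) j' (Finset.mem_insert_of_mem hj') hne)
      (fun j hj => hdep j (Finset.mem_insert_of_mem hj))]

lemma I_forall_prod {J : Type*} (T : Finset J) (Q : J → Prop) :
    I (∀ j ∈ T, Q j) = ∏ j ∈ T, I (Q j) := by
  classical
  induction T using Finset.induction with
  | empty => simp [I_true]
  | @insert a s ha ih =>
    rw [Finset.prod_insert ha, ← ih]
    by_cases hQ : Q a
    · rw [I_true hQ, one_mul]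
      apply I_congr
      constructor
      · intro h j hj; exact h j (Finset.mem_insert_of_mem hj)
      · intro h j hj
        rcases Finset.mem_insert.mp hj with rfl | hj
        · exact hQ
        · exact h j hj
    · rw [I_false hQ, zero_mul, I_false]
      intro h
      exact hQ (h a (Finset.mem_insert_self a s))


lemma I_not (P : Prop) : I (¬ P) = 1 - I P := by
  by_cases h : P
  · rw [I_true h, I_false (not_not_intro h)]; ring
  · rw [I_false h, I_true h]; ring

end ProofAux

namespace ProofAux
variable {N : ℕ}

lemma mem_nbhd_iff (ω : Sym2 (Fin N) → Bool) (A : Finset (Fin N)) (j : Fin N) :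
    j ∈ nbhdSet (graphOf ω) ↑A ↔ ∃ a ∈ A, a ≠ j ∧ ω s(a, j) = true := by
  rfl

lemma vertNeg (p : ℝ) (A : Finset (Fin N)) (j : Fin N) (hj : j ∉ A) :
    ∑ ω : Sym2 (Fin N) → Bool, W p ω * I (¬ j ∈ nbhdSet (graphOf ω) ↑A)
      = (1 - p) ^ A.card := by
  classical
  set S : Finset (Sym2 (Fin N)) := A.image (fun a => s(a, j)) with hS
  have key : ∀ ω : Sym2 (Fin N) → Bool,
      (¬ j ∈ nbhdSet (graphOf ω) ↑A) ↔ ∀ e, ω e ∈ (if e ∈ S then ({false} : Finset Bool) else Finset.univ) := by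
    intro ω
    rw [mem_nbhd_iff]
    constructor
    · intro h e
      by_cases he : e ∈ S
      · rw [if_pos he]
        rw [hS, Finset.mem_image] at he
        obtain ⟨a, ha, rfl⟩ := he
        simp only [Finset.mem_singleton]
        by_contra hne
        exact h ⟨a, ha, fun h' => hj (h' ▸ ha), by simpa using hne⟩
      · rw [if_neg he]; exact Finset.mem_univ _
    · rintro h ⟨a, ha, _, htrue⟩
      have heS : s(a, j) ∈ S := Finset.mem_image_of_mem _ ha
      have := h s(a, j)
      rw [if_pos heS, Finset.mem_singleton] at this
      rw [htrue] at this
      exact Bool.true_eq_false ▸ (by simpa using this)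
  have := sum_weight_indPi p (fun e => if e ∈ S then ({false} : Finset Bool) else Finset.univ)
  rw [show (∑ ω : Sym2 (Fin N) → Bool, W p ω * I (¬ j ∈ nbhdSet (graphOf ω) ↑A))
      = ∑ ω : Sym2 (Fin N) → Bool, W p ω *
        I (∀ e, ω e ∈ (if e ∈ S then ({false} : Finset Bool) else Finset.univ)) from
    Finset.sum_congr rfl fun ω _ => by rw [I_congr (key ω)]]
  rw [this]
  have hcard : S.card = A.card := by
    rw [hS]
    apply Finset.card_image_of_injOn
    intro a ha a' ha' heq
    rcases Sym2.eq_iff.mp heq with ⟨h1, _⟩ | ⟨h1, h2⟩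
    · exact h1
    · exact absurd (h2 ▸ ha') hj
  calc ∏ e : Sym2 (Fin N), ∑ b ∈ (if e ∈ S then ({false} : Finset Bool) else Finset.univ), w p b
      = ∏ e : Sym2 (Fin N), (if e ∈ S then (1 - p) else 1) := by
        apply Finset.prod_congr rfl
        intro e _
        by_cases he : e ∈ S
        · rw [if_pos he, if_pos he]; simp [w]
        · rw [if_neg he, if_neg he]; exact sum_w p
    _ = ∏ e ∈ S, (1 - p) := by
        rw [← Finset.prod_filter]
        congr 1
        ext e
        simp
    _ = (1 - p) ^ A.card := by rw [Finset.prod_const, hcard]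

lemma vertPos (p : ℝ) (A : Finset (Fin N)) (j : Fin N) (hj : j ∉ A) :
    ∑ ω : Sym2 (Fin N) → Bool, W p ω * I (j ∈ nbhdSet (graphOf ω) ↑A)
      = 1 - (1 - p) ^ A.card := by
  have h : ∀ ω : Sym2 (Fin N) → Bool,
      W p ω * I (j ∈ nbhdSet (graphOf ω) ↑A)
        = W p ω - W p ω * I (¬ j ∈ nbhdSet (graphOf ω) ↑A) := by
    intro ω
    rw [I_not]
    by_cases h : j ∈ nbhdSet (graphOf ω) ↑A
    · rw [I_true h]; ring
    · rw [I_false h]; ring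
  rw [Finset.sum_congr rfl (fun ω _ => h ω), Finset.sum_sub_distrib, totalW, vertNeg p A j hj]

end ProofAux

namespace ProofAux
variable {N : ℕ}

lemma front (p : ℝ) (A C A₁ : Finset (Fin N)) (hA : A ⊆ C) (hA₁ : A₁ ⊆ Finset.univ \ C) :
    ∑ ω : Sym2 (Fin N) → Bool, W p ω * I (nbhdSet (graphOf ω) ↑A \ ↑C = (↑A₁ : Set (Fin N)))
      = (1 - (1 - p) ^ A.card) ^ A₁.card
        * ((1 - p) ^ A.card) ^ ((Finset.univ \ C).card - A₁.card) := by
  classical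
  have hiff : ∀ ω : Sym2 (Fin N) → Bool,
      (nbhdSet (graphOf ω) ↑A \ ↑C = (↑A₁ : Set (Fin N))) ↔
      ∀ j ∈ Finset.univ \ C, (j ∈ nbhdSet (graphOf ω) ↑A ↔ j ∈ A₁) := by
    intro ω
    constructor
    · intro h j hj
      rw [Finset.mem_sdiff] at hj
      constructor
      · intro hn
        have : j ∈ nbhdSet (graphOf ω) ↑A \ (↑C : Set (Fin N)) := ⟨hn, hj.2⟩
        rw [h] at this
        exact this
      · intro hj1
        have : j ∈ (↑A₁ : Set (Fin N)) := hj1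
        rw [← h] at this
        exact this.1
    · intro h
      ext j
      by_cases hjC : j ∈ C
      · constructor
        · rintro ⟨_, hc⟩; exact absurd hjC hc
        · intro hj1
          have := hA₁ hj1
          rw [Finset.mem_sdiff] at this
          exact absurd hjC this.2
      · have := h j (Finset.mem_sdiff.mpr ⟨Finset.mem_univ j, hjC⟩)
        constructor
        · rintro ⟨hn, _⟩; exact this.mp hn
        · intro hj1
          exact ⟨this.mpr hj1, hjC⟩
  have step1 : ∑ ω : Sym2 (Fin N) → Bool, W p ω * I (nbhdSet (graphOf ω) ↑A \ ↑C = (↑A₁ : Set (Fin N)))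
      = ∑ ω : Sym2 (Fin N) → Bool, W p ω * ∏ j ∈ Finset.univ \ C,
          I (j ∈ nbhdSet (graphOf ω) ↑A ↔ j ∈ A₁) := by
    apply Finset.sum_congr rfl
    intro ω _
    rw [I_congr (hiff ω), I_forall_prod]
  rw [step1]
  rw [prod_split_family p (Finset.univ \ C) (fun j e => ∃ a ∈ A, e = s(a, j))
    (fun j ω => I (j ∈ nbhdSet (graphOf ω) ↑A ↔ j ∈ A₁))]
  · have per : ∀ j ∈ Finset.univ \ C,
        (∑ ω : Sym2 (Fin N) → Bool, W p ω * I (j ∈ nbhdSet (graphOf ω) ↑A ↔ j ∈ A₁))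
          = if j ∈ A₁ then (1 - (1 - p) ^ A.card) else (1 - p) ^ A.card := by
      intro j hj
      rw [Finset.mem_sdiff] at hj
      have hjA : j ∉ A := fun h => hj.2 (hA h)
      by_cases hj1 : j ∈ A₁
      · rw [if_pos hj1, ← vertPos p A j hjA]
        apply Finset.sum_congr rfl
        intro ω _
        congr 1
        apply I_congr
        exact ⟨fun h => h.mpr hj1, fun h => ⟨fun _ => hj1, fun _ => h⟩⟩
      · rw [if_neg hj1, ← vertNeg p A j hjA]
        apply Finset.sum_congr rfl
        intro ω _
        congr 1
        apply I_congr
        constructor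
        · intro h hn; exact hj1 (h.mp hn)
        · intro h; exact ⟨fun hn => absurd hn h, fun h1 => absurd h1 hj1⟩
    rw [Finset.prod_congr rfl per]
    have hsub : A₁ ⊆ Finset.univ \ C := hA₁
    have hsplit : Finset.univ \ C = A₁ ∪ ((Finset.univ \ C) \ A₁) :=
      (Finset.union_sdiff_of_subset hsub).symm
    rw [hsplit, Finset.prod_union Finset.disjoint_sdiff]
    have h1 : (∏ x ∈ A₁, if x ∈ A₁ then 1 - (1 - p) ^ A.card else (1 - p) ^ A.card)
        = (1 - (1 - p) ^ A.card) ^ A₁.card := by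
      rw [Finset.prod_congr rfl (fun x hx => if_pos hx), Finset.prod_const]
    have h2 : (∏ x ∈ (Finset.univ \ C) \ A₁, if x ∈ A₁ then 1 - (1 - p) ^ A.card else (1 - p) ^ A.card)
        = ((1 - p) ^ A.card) ^ ((Finset.univ \ C).card - A₁.card) := by
      rw [Finset.prod_congr rfl (fun x hx => if_neg (Finset.mem_sdiff.mp hx).2), Finset.prod_const,
        Finset.card_sdiff_of_subset hsub]
    rw [h1, h2]
    rw [← hsplit]
  · -- disjointness
    intro j hj j' hj' hne e he he'
    obtain ⟨a, ha, rfl⟩ := he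
    obtain ⟨a', ha', heq⟩ := he'
    rw [Finset.mem_sdiff] at hj hj'
    rcases Sym2.eq_iff.mp heq with ⟨h1, h2⟩ | ⟨h1, h2⟩
    · exact hne (h2.symm ▸ rfl)
    · exact hj'.2 (hA (h1 ▸ ha))
  · -- dependence
    intro j hj ω ω' hagree
    apply I_congr
    have : (j ∈ nbhdSet (graphOf ω) ↑A) ↔ (j ∈ nbhdSet (graphOf ω') ↑A) := by
      rw [mem_nbhd_iff, mem_nbhd_iff]
      constructor
      · rintro ⟨a, ha, hne2, hb⟩
        exact ⟨a, ha, hne2, by rw [← hagree s(a, j) ⟨a, ha, rfl⟩]; exact hb⟩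
      · rintro ⟨a, ha, hne2, hb⟩
        exact ⟨a, ha, hne2, by rw [hagree s(a, j) ⟨a, ha, rfl⟩]; exact hb⟩
    rw [this]

end ProofAux

namespace ProofAux
variable {N : ℕ}

def gStep (G : SimpleGraph (Fin N)) (X : Set (Fin N) × Set (Fin N)) : Set (Fin N) × Set (Fin N) :=
  (nbhdSet G X.1 \ X.2, X.2 ∪ (nbhdSet G X.1 \ X.2))

def gAux (G : SimpleGraph (Fin N)) (X : Set (Fin N) × Set (Fin N)) : ℕ → Set (Fin N) × Set (Fin N)
  | 0 => X
  | t + 1 => gStep G (gAux G X t)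

lemma stageAux_eq (G : SimpleGraph (Fin N)) (i : Fin N) (t : ℕ) :
    stageAux G i t = gAux G ({i}, {i}) t := by
  induction t with
  | zero => rfl
  | succ t ih => show _ = gStep G (gAux G ({i}, {i}) t); rw [← ih]; rfl

lemma gAux_shift (G : SimpleGraph (Fin N)) (X : Set (Fin N) × Set (Fin N)) (t : ℕ) :
    gAux G X (t + 1) = gAux G (gStep G X) t := by
  induction t with
  | zero => rfl
  | succ t ih => show gStep G (gAux G X (t+1)) = gStep G (gAux G (gStep G X) t); rw [ih]

lemma gAux_agree (C : Set (Fin N)) (P : Sym2 (Fin N) → Prop)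
    (hP : ∀ a b : Fin N, a ∉ C → b ∉ C → ¬ P s(a, b))
    (ω ω' : Sym2 (Fin N) → Bool) (hagree : ∀ e, ¬ P e → ω e = ω' e)
    (X : Set (Fin N) × Set (Fin N)) (hX1 : ∀ x ∈ X.1, x ∉ C) (hX2 : C ⊆ X.2) (t : ℕ) :
    gAux (graphOf ω) X t = gAux (graphOf ω') X t
      ∧ (∀ x ∈ (gAux (graphOf ω) X t).1, x ∉ C) ∧ C ⊆ (gAux (graphOf ω) X t).2 := by
  induction t with
  | zero => exact ⟨rfl, hX1, hX2⟩
  | succ t ih =>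
    obtain ⟨heq, hfr, hC⟩ := ih
    set Y := gAux (graphOf ω) X t with hY
    have hnb : nbhdSet (graphOf ω) Y.1 \ Y.2 = nbhdSet (graphOf ω') Y.1 \ Y.2 := by
      ext j
      simp only [Set.mem_diff]
      constructor
      · rintro ⟨⟨a, ha, hne, hb⟩, hj2⟩
        refine ⟨⟨a, ha, hne, ?_⟩, hj2⟩
        rw [← hagree s(a, j) (hP a j (hfr a ha) (fun hjC => hj2 (hC hjC)))]
        exact hb
      · rintro ⟨⟨a, ha, hne, hb⟩, hj2⟩
        refine ⟨⟨a, ha, hne, ?_⟩, hj2⟩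
        rw [hagree s(a, j) (hP a j (hfr a ha) (fun hjC => hj2 (hC hjC)))]
        exact hb
    constructor
    · show gStep (graphOf ω) Y = gStep (graphOf ω') (gAux (graphOf ω') X t)
      rw [← heq]
      unfold gStep
      rw [hnb]
    · constructor
      · intro x hx
        have : x ∈ nbhdSet (graphOf ω) Y.1 \ Y.2 := hx
        exact fun hxC => this.2 (hC hxC)
      · intro c hc
        exact Set.mem_union_left _ (hC hc)

end ProofAux

namespace ProofAux
variable {N : ℕ}

lemma keyA (r : ℕ) (A C : Finset (Fin N)) (m : ℕ → ℕ) (ω : Sym2 (Fin N) → Bool) :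
    I (∀ s ∈ Finset.range (r+1), ((gAux (graphOf ω) (↑A, ↑C) (s+1)).1).ncard = m (s+1)) =
    ∑ A₁ ∈ Finset.powersetCard (m 1) (Finset.univ \ C),
      I (nbhdSet (graphOf ω) ↑A \ ↑C = (↑A₁ : Set (Fin N))) *
      I (∀ s ∈ Finset.range r, ((gAux (graphOf ω) (↑A₁, ↑(C ∪ A₁)) (s+1)).1).ncard = m (s+2)) := by
  classical
  set Fset : Set (Fin N) := nbhdSet (graphOf ω) ↑A \ ↑C with hFset
  have hfin : Fset.Finite := Set.toFinite _
  set A₀ : Finset (Fin N) := hfin.toFinset with hA₀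
  have hcoe : (↑A₀ : Set (Fin N)) = Fset := hfin.coe_toFinset
  have hsub0 : A₀ ⊆ Finset.univ \ C := by
    intro x hx
    rw [hA₀, Set.Finite.mem_toFinset] at hx
    exact Finset.mem_sdiff.mpr ⟨Finset.mem_univ x, hx.2⟩
  have hstg1 : (gAux (graphOf ω) (↑A, ↑C) 1).1 = Fset := rfl
  have hstep : gStep (graphOf ω) (↑A, ↑C) = ((↑A₀ : Set (Fin N)), (↑(C ∪ A₀) : Set (Fin N))) := by
    unfold gStep
    rw [Finset.coe_union]
    exact Prod.ext (by simpa using hcoe.symm) (by show (↑C : Set (Fin N)) ∪ Fset = _; rw [← hcoe])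
  have hcard0 : Fset.ncard = A₀.card := by
    rw [hA₀, Set.ncard_eq_toFinset_card]
  by_cases h₀ : A₀ ∈ Finset.powersetCard (m 1) (Finset.univ \ C)
  · rw [Finset.sum_eq_single_of_mem A₀ h₀]
    · rw [I_true (hcoe.symm : Fset = ↑A₀), one_mul]
      apply I_congr
      have hc1 : Fset.ncard = m 1 := by
        rw [hcard0]; exact (Finset.mem_powersetCard.mp h₀).2
      constructor
      · intro h s hs
        rw [Finset.mem_range] at hs
        have := h (s+1) (Finset.mem_range.mpr (by omega))
        rw [gAux_shift, hstep] at this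
        exact this
      · intro h s hs
        rw [Finset.mem_range] at hs
        rcases Nat.eq_zero_or_pos s with rfl | hpos
        · rw [hstg1]; exact hc1
        · obtain ⟨t, rfl⟩ : ∃ t, s = t + 1 := ⟨s - 1, by omega⟩
          rw [gAux_shift, hstep]
          exact h t (Finset.mem_range.mpr (by omega))
    · intro A₁ hA₁mem hne
      rw [I_false, zero_mul]
      intro heq
      apply hne
      apply Finset.coe_injective
      rw [← heq, hcoe]
  · rw [I_false, Finset.sum_eq_zero]
    · intro A₁ hA₁mem
      rw [I_false, zero_mul]
      intro heq
      apply h₀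
      have : A₀ = A₁ := Finset.coe_injective (by rw [hcoe, heq])
      rw [this]; exact hA₁mem
    · intro h
      apply h₀
      rw [Finset.mem_powersetCard]
      refine ⟨hsub0, ?_⟩
      rw [← hcard0, ← hstg1]
      exact h 0 (Finset.mem_range.mpr (by omega))

end ProofAux

namespace ProofAux
variable {N : ℕ}

lemma gen (p : ℝ) (r : ℕ) :
    ∀ (A C : Finset (Fin N)), A ⊆ C → ∀ m : ℕ → ℕ, m 0 = A.card →
    ∑ ω : Sym2 (Fin N) → Bool,
        W p ω * I (∀ s ∈ Finset.range r, ((gAux (graphOf ω) (↑A, ↑C) (s+1)).1).ncard = m (s+1))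
      = ∏ s ∈ Finset.range r,
          binomPMF (N - C.card - ∑ k ∈ Finset.range s, m (k+1)) (1 - (1-p) ^ (m s)) (m (s+1)) := by
  classical
  induction r with
  | zero =>
    intro A C hAC m hm0
    rw [Finset.range_zero, Finset.prod_empty]
    rw [Finset.sum_congr rfl (fun ω _ => by
      rw [I_true (fun s hs => absurd hs (Finset.notMem_empty s)), mul_one])]
    exact totalW p
  | succ r ih =>
    intro A C hAC m hm0
    -- expand indicator
    rw [Finset.sum_congr rfl (fun ω _ => by rw [keyA r A C m ω, Finset.mul_sum])]
    rw [Finset.sum_comm]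
    have inner : ∀ A₁ ∈ Finset.powersetCard (m 1) (Finset.univ \ C),
        (∑ ω : Sym2 (Fin N) → Bool, W p ω *
          (I (nbhdSet (graphOf ω) ↑A \ ↑C = (↑A₁ : Set (Fin N))) *
           I (∀ s ∈ Finset.range r, ((gAux (graphOf ω) (↑A₁, ↑(C ∪ A₁)) (s+1)).1).ncard = m (s+2))))
        = ((1 - (1 - p) ^ A.card) ^ (m 1) * ((1 - p) ^ A.card) ^ (N - C.card - m 1))
          * ∏ s ∈ Finset.range r,
              binomPMF (N - C.card - ∑ k ∈ Finset.range (s+1), m (k+1)) (1 - (1-p) ^ (m (s+1))) (m (s+2)) := by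
      intro A₁ hA₁
      rw [Finset.mem_powersetCard] at hA₁
      obtain ⟨hsub, hcard⟩ := hA₁
      have hA₁C : ∀ x ∈ A₁, x ∉ C := fun x hx => (Finset.mem_sdiff.mp (hsub hx)).2
      -- split
      rw [prod_split p (fun e => ∃ a ∈ A, ∃ b : Fin N, b ∉ C ∧ e = s(a, b))]
      · -- front factor
        have hfr := front p A C A₁ hAC hsub
        have hcardsd : (Finset.univ \ C).card = N - C.card := by
          rw [Finset.card_sdiff_of_subset (Finset.subset_univ C), Finset.card_univ, Fintype.card_fin]
        rw [hfr, hcard, hcardsd]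
        congr 1
        -- IH factor
        have hm0' : (fun k => m (k+1)) 0 = A₁.card := hcard.symm
        have hih := ih A₁ (C ∪ A₁) Finset.subset_union_right (fun k => m (k+1)) hm0'
        rw [hih]
        apply Finset.prod_congr rfl
        intro s _
        have hCdisj : Disjoint C A₁ := Finset.disjoint_left.mpr (fun x hx hx1 => hA₁C x hx1 hx)
        have hCU : (C ∪ A₁).card = C.card + m 1 := by
          rw [Finset.card_union_of_disjoint hCdisj, hcard]
        show binomPMF (N - (C ∪ A₁).card - ∑ k ∈ Finset.range s, m (k+2)) (1 - (1-p) ^ (m (s+1))) (m (s+2))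
          = binomPMF (N - C.card - ∑ k ∈ Finset.range (s+1), m (k+1)) (1 - (1-p) ^ (m (s+1))) (m (s+2))
        have harg : N - (C ∪ A₁).card - ∑ k ∈ Finset.range s, m (k+2)
            = N - C.card - ∑ k ∈ Finset.range (s+1), m (k+1) := by
          rw [hCU, Finset.sum_range_succ']
          have h2 : ∑ k ∈ Finset.range s, m (k + 1 + 1) = ∑ k ∈ Finset.range s, m (k + 2) := rfl
          have h3 : m (0 + 1) = m 1 := rfl
          omega
        rw [harg]
      · -- dependence of front indicator on P-edges
        intro ω ω' hagree
        apply I_congr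
        have : nbhdSet (graphOf ω) ↑A \ (↑C : Set (Fin N)) = nbhdSet (graphOf ω') ↑A \ ↑C := by
          ext j
          simp only [Set.mem_diff]
          constructor
          · rintro ⟨⟨a, ha, hne, hb⟩, hj2⟩
            exact ⟨⟨a, ha, hne, by rw [← hagree s(a, j) ⟨a, ha, j, hj2, rfl⟩]; exact hb⟩, hj2⟩
          · rintro ⟨⟨a, ha, hne, hb⟩, hj2⟩
            exact ⟨⟨a, ha, hne, by rw [hagree s(a, j) ⟨a, ha, j, hj2, rfl⟩]; exact hb⟩, hj2⟩
        rw [this]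
      · -- dependence of continuation on non-P edges
        intro ω ω' hagree
        apply I_congr
        have hP : ∀ a b : Fin N, a ∉ (↑C : Set (Fin N)) → b ∉ (↑C : Set (Fin N)) →
            ¬ (∃ a' ∈ A, ∃ b' : Fin N, b' ∉ C ∧ s(a, b) = s(a', b')) := by
          rintro a b haC hbC ⟨a', ha', b', hb', heq⟩
          have ha'C : a' ∈ C := hAC ha'
          rcases Sym2.eq_iff.mp heq with ⟨h1, h2⟩ | ⟨h1, h2⟩
          · exact haC (h1 ▸ ha'C)
          · exact hbC (h2 ▸ ha'C)
        have := gAux_agree (↑C : Set (Fin N)) _ hP ω ω' hagree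
          ((↑A₁ : Set (Fin N)), (↑(C ∪ A₁) : Set (Fin N)))
          (fun x hx => hA₁C x hx) (by rw [Finset.coe_union]; exact Set.subset_union_left)
        constructor
        · intro h s hs
          rw [← (this (s+1)).1]
          exact h s hs
        · intro h s hs
          rw [(this (s+1)).1]
          exact h s hs
    rw [Finset.sum_congr rfl inner, Finset.sum_const, Finset.card_powersetCard]
    have hcardsd : (Finset.univ \ C).card = N - C.card := by
      rw [Finset.card_sdiff_of_subset (Finset.subset_univ C), Finset.card_univ, Fintype.card_fin]
    rw [hcardsd, Finset.prod_range_succ']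
    have hfirst : binomPMF (N - C.card - ∑ k ∈ Finset.range 0, m (k+1)) (1 - (1-p) ^ (m 0)) (m 1)
        = ((N - C.card).choose (m 1) : ℝ)
          * ((1 - (1 - p) ^ A.card) ^ (m 1) * ((1 - p) ^ A.card) ^ (N - C.card - m 1)) := by
      rw [binomPMF, hm0]
      have : (1 : ℝ) - (1 - (1 - p) ^ A.card) = (1 - p) ^ A.card := by ring
      rw [this]
      simp only [Finset.range_zero, Finset.sum_empty, Nat.sub_zero]
      ring
    rw [hfirst]
    rw [nsmul_eq_mul]
    ring
end ProofAux

namespace ProofAux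
variable {N : ℕ}

lemma bern_singleton (p : ℝ) (hp0 : 0 ≤ p) (hp1 : p ≤ 1) (b : Bool) :
    bern p {b} = ENNReal.ofReal (w p b) := by
  rw [bern, PMF.toMeasure_apply_singleton _ _ (measurableSet_singleton b)]
  have hmin : min p.toNNReal 1 = p.toNNReal :=
    min_eq_left (Real.toNNReal_le_one.mpr hp1)
  cases b
  · simp only [PMF.bernoulli_apply, Bool.cond_false, hmin, w, Bool.false_eq_true, if_false]
    rw [ENNReal.ofReal_sub _ hp0, ENNReal.ofReal_one]
    rw [ENNReal.coe_sub, ENNReal.coe_one]; rfl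
  · simp only [PMF.bernoulli_apply, Bool.cond_true, hmin, w, if_true]
    rfl

lemma gilbert_singleton (p : ℝ) (hp0 : 0 ≤ p) (hp1 : p ≤ 1) (ω : Sym2 (Fin N) → Bool) :
    gilbert N p {ω} = ENNReal.ofReal (W p ω) := by
  rw [gilbert, ← Set.univ_pi_singleton ω, Measure.pi_pi]
  rw [Finset.prod_congr rfl (fun e _ => bern_singleton p hp0 hp1 (ω e))]
  rw [W, ENNReal.ofReal_prod_of_nonneg]
  intro e _
  rw [w]
  by_cases h : ω e
  · rw [if_pos h]; exact hp0
  · rw [if_neg h]; linarith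

lemma w_nonneg (p : ℝ) (hp0 : 0 ≤ p) (hp1 : p ≤ 1) (b : Bool) : 0 ≤ w p b := by
  rw [w]; by_cases h : b
  · rw [if_pos h]; exact hp0
  · rw [if_neg h]; linarith

lemma W_nonneg {ι : Type*} [Fintype ι] (p : ℝ) (hp0 : 0 ≤ p) (hp1 : p ≤ 1) (ω : ι → Bool) : 0 ≤ W p ω :=
  Finset.prod_nonneg (fun e _ => w_nonneg p hp0 hp1 (ω e))

lemma gilbert_toReal (p : ℝ) (hp0 : 0 ≤ p) (hp1 : p ≤ 1) (S : Set (Sym2 (Fin N) → Bool)) :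
    (gilbert N p S).toReal = ∑ ω : Sym2 (Fin N) → Bool, W p ω * I (ω ∈ S) := by
  classical
  have hfin : S.Finite := Set.toFinite _
  set T : Finset (Sym2 (Fin N) → Bool) := hfin.toFinset with hT
  have hS : S = ⋃ ω ∈ T, {ω} := by
    ext x
    simp only [Set.mem_iUnion, Set.mem_singleton_iff, exists_prop, hT,
      Set.Finite.mem_toFinset]
    exact ⟨fun h => ⟨x, h, rfl⟩, fun ⟨y, hy, hxy⟩ => hxy ▸ hy⟩
  have hmeas : gilbert N p S = ∑ ω ∈ T, gilbert N p {ω} := by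
    rw [hS]
    apply measure_biUnion_finset
    · intro x _ y _ hxy
      simp [Set.disjoint_singleton, hxy]
    · intro ω _
      exact measurableSet_singleton ω
  rw [hmeas]
  rw [Finset.sum_congr rfl (fun ω _ => gilbert_singleton p hp0 hp1 ω)]
  rw [ENNReal.toReal_sum (fun ω _ => ENNReal.ofReal_ne_top)]
  rw [Finset.sum_congr rfl (fun ω _ => ENNReal.toReal_ofReal (W_nonneg p hp0 hp1 ω))]
  rw [show (∑ ω : Sym2 (Fin N) → Bool, W p ω * I (ω ∈ S))
      = ∑ ω ∈ Finset.univ.filter (fun ω => ω ∈ S), W p ω from by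
    rw [Finset.sum_filter]
    apply Finset.sum_congr rfl
    intro ω _
    by_cases h : ω ∈ S
    · rw [if_pos h, I_true h, mul_one]
    · rw [if_neg h, I_false h, mul_zero]]
  apply Finset.sum_congr
  · ext ω
    simp only [hT, Set.Finite.mem_toFinset, Finset.mem_filter, Finset.mem_univ, true_and]
  · intro ω _
    rfl

end ProofAux


/-- The joint probability that `|𝒩_i^{(s)}| = n s` for every `s = 1, …, r` factorizes
as a product of binomial probabilities: with `n 0 = 1`,
`P(|𝒩_i^{(1)}| = n 1, …, |𝒩_i^{(r)}| = n r) = ∏_{s=1}^{r} P(Z_{n_1:n_{s-1}}(N) = n s)`. -/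
theorem stage_card_joint_prob (N : ℕ) (p : ℝ) (hp0 : 0 ≤ p) (hp1 : p ≤ 1) (i : Fin N)
    (r : ℕ) (hr : 1 ≤ r) (n : ℕ → ℕ) (h0 : n 0 = 1)
    (hn1 : ∀ s ∈ Finset.Icc 1 r, 1 ≤ n s)
    (hsum : ∑ s ∈ Finset.range (r + 1), n s ≤ N) :
    (gilbert N p
        {ω | ∀ s ∈ Finset.Icc 1 r, (stageSet (graphOf ω) i s).ncard = n s}).toReal =
      ∏ s ∈ Finset.Icc 1 r, Zpmf N p n s := by
  open ProofAux in
  classical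
  rw [gilbert_toReal p hp0 hp1]
  have hev : ∀ ω : Sym2 (Fin N) → Bool,
      (ω ∈ {ω | ∀ s ∈ Finset.Icc 1 r, (stageSet (graphOf ω) i s).ncard = n s}) ↔
      (∀ s ∈ Finset.range r,
        ((gAux (graphOf ω) ((↑({i} : Finset (Fin N)) : Set (Fin N)),
          (↑({i} : Finset (Fin N)) : Set (Fin N))) (s+1)).1).ncard = n (s+1)) := by
    intro ω
    have hst : ∀ t, stageSet (graphOf ω) i t
        = (gAux (graphOf ω) ((↑({i} : Finset (Fin N)) : Set (Fin N)),
            (↑({i} : Finset (Fin N)) : Set (Fin N))) t).1 := by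
      intro t
      rw [stageSet, stageAux_eq]
      congr 1
      rw [Finset.coe_singleton]
    constructor
    · intro h s hs
      rw [Finset.mem_range] at hs
      rw [← hst]
      exact h (s+1) (Finset.mem_Icc.mpr ⟨by omega, by omega⟩)
    · intro h s hs
      rw [Finset.mem_Icc] at hs
      obtain ⟨t, rfl⟩ : ∃ t, s = t + 1 := ⟨s - 1, by omega⟩
      rw [hst]
      exact h t (Finset.mem_range.mpr (by omega))
  rw [Finset.sum_congr rfl (fun ω _ => by rw [I_congr (hev ω)])]
  rw [gen p r {i} {i} (subset_refl _) n (by rw [h0, Finset.card_singleton])]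
  have hbij : ∏ s ∈ Finset.Icc 1 r, Zpmf N p n s = ∏ s ∈ Finset.range r, Zpmf N p n (s+1) := by
    apply Finset.prod_nbij (fun s => s - 1)
    · intro s hs
      rw [Finset.mem_Icc] at hs
      exact Finset.mem_range.mpr (by omega)
    · intro s hs t ht hst
      simp only at hst
      rw [Finset.mem_coe, Finset.mem_Icc] at hs ht
      omega
    · intro t ht
      rw [Finset.mem_coe, Finset.mem_range] at ht
      exact ⟨t + 1, Finset.mem_coe.mpr (Finset.mem_Icc.mpr ⟨by omega, by omega⟩), by simp⟩
    · intro s hs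
      rw [Finset.mem_Icc] at hs
      congr 1
      omega
  rw [hbij]
  apply Finset.prod_congr rfl
  intro s _
  rw [Zpmf]
  have h1 : (s + 1) - 1 = s := rfl
  rw [h1]
  have harg : N - ∑ k ∈ Finset.range (s+1), n k
      = N - ({i} : Finset (Fin N)).card - ∑ k ∈ Finset.range s, n (k+1) := by
    rw [Finset.sum_range_succ', Finset.card_singleton, h0]
    omega
  rw [harg]


end
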